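/- Strong convexity of the pointwise population loss (Lemma A.5). Fix d ≥ 1, σ > 0, M ≥ √d. There exists a constant c_sc = c_sc(σ,M,d) > 0, and indeed one may take c_sc = (Φ(M/(2σ)) − 1/2)²/(2M²), such that for all r, r⋆ ∈ [0, √d]: g(r; r⋆) − g(r⋆; r⋆) ≥ c_sc (r − r⋆)². -/

import Mathlib

open MeasureTheory ProbabilityTheory Filter

noncomputable section

/-- The standard normal probability density function φ. -/
def stdPDF (x : ℝ) : ℝ := Real.exp (-(x ^ 2) / 2) / Real.sqrt (2 * Real.pi)

/-- The standard normal cumulative distribution function Φ. -/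
def stdCDF (x : ℝ) : ℝ := ∫ t in Set.Iic x, stdPDF t

/-- The standard Gaussian measure on ℝ. -/
def stdGaussian : Measure ℝ := gaussianReal 0 1

/-- `T_M([u]₊) = min{max{u,0}, M}`. -/
def capPos (M u : ℝ) : ℝ := min M (max u 0)

/-- The density `q_{M,r}(y)` of the capped observation with respect to
`ν = δ₀ + Leb|_(0,M) + δ_M`. -/
def qDen (σ M r y : ℝ) : ℝ :=
  if y = 0 then stdCDF (-r / σ)
  else if y = M then 1 - stdCDF ((M - r) / σ)
  else σ⁻¹ * stdPDF ((y - r) / σ)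

/-- The loss `ℓ_M(y, r) = - log q_{M,r}(y)`. -/
def lossM (σ M y r : ℝ) : ℝ := - Real.log (qDen σ M r y)

/-- The reference measure `ν = δ₀ + Leb|_(0,M) + δ_M`. -/
def refMeas (M : ℝ) : Measure ℝ :=
  Measure.dirac 0 + volume.restrict (Set.Ioo 0 M) + Measure.dirac M

/-- The law `P_r` of the capped observation `T_M([r + σZ]₊)`. -/
def cappedLaw (σ M r : ℝ) : Measure ℝ :=
  Measure.map (fun z => capPos M (r + σ * z)) stdGaussian

/-- The capped mean `μ_M(r) = E[T_M([r + σZ]₊)]`. -/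
def cappedMean (σ M r : ℝ) : ℝ := ∫ z, capPos M (r + σ * z) ∂stdGaussian

/-- The population loss `g(r; r⋆) = E[ℓ_M(T_M([r⋆+σZ]₊), r)]`. -/
def popLoss (σ M r rstar : ℝ) : ℝ :=
  ∫ z, lossM σ M (capPos M (rstar + σ * z)) r ∂stdGaussian

/-- Euclidean distance on `Fin d → ℝ`. -/
def eDist {d : ℕ} (x y : Fin d → ℝ) : ℝ := Real.sqrt (∑ k, (x k - y k) ^ 2)

/-- The cube `([0,1]^d)^n` of configurations of `n` points. -/
def cube (n d : ℕ) : Set (Fin n → Fin d → ℝ) :=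
  {X | ∀ i k, X i k ∈ Set.Icc (0 : ℝ) 1}

/-- Number of unordered pairs `N = n(n-1)/2` as a real. -/
def numPairs (n : ℕ) : ℝ := (n : ℝ) * ((n : ℝ) - 1) / 2

/-- Sum over unordered pairs `i < j`. -/
def pairSum {n : ℕ} (f : Fin n → Fin n → ℝ) : ℝ :=
  ∑ i : Fin n, ∑ j : Fin n, if i < j then f i j else 0

/-- The pairwise distances `r_{ij}(X) = ‖x_i - x_j‖`. -/
def rdist {n d : ℕ} (X : Fin n → Fin d → ℝ) (i j : Fin n) : ℝ := eDist (X i) (X j)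

/-- The capped dissimilarities `D̃_{ij} = T_M([r⋆_{ij} + σ Z_{ij}]₊)`. -/
def cappedD {n d : ℕ} (σ M : ℝ) (Xstar : Fin n → Fin d → ℝ) (Z : Fin n → Fin n → ℝ)
    (i j : Fin n) : ℝ := capPos M (rdist Xstar i j + σ * Z i j)

/-- The empirical risk `Rₙ(X)`. -/
def empRisk {n d : ℕ} (σ M : ℝ) (Dt : Fin n → Fin n → ℝ) (X : Fin n → Fin d → ℝ) : ℝ :=
  (numPairs n)⁻¹ * pairSum fun i j => lossM σ M (Dt i j) (rdist X i j)

/-- The population risk `Rₙ⁰(X)`. -/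
def popRisk {n d : ℕ} (σ M : ℝ) (Xstar X : Fin n → Fin d → ℝ) : ℝ :=
  (numPairs n)⁻¹ * pairSum fun i j => popLoss σ M (rdist X i j) (rdist Xstar i j)

/-- The distance discrepancy `Δ_dist(X, X⋆)`. -/
def distDiscrep {n d : ℕ} (X Xstar : Fin n → Fin d → ℝ) : ℝ :=
  (numPairs n)⁻¹ * pairSum fun i j => (rdist X i j - rdist Xstar i j) ^ 2

/-- The centering matrix `J = I - n⁻¹ 11ᵀ`. -/
def centerMat (n : ℕ) : Matrix (Fin n) (Fin n) ℝ :=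
  1 - ((n : ℝ)⁻¹) • Matrix.of (fun _ _ => (1 : ℝ))

/-- A configuration viewed as an `n × d` matrix. -/
def toMat {n d : ℕ} (X : Fin n → Fin d → ℝ) : Matrix (Fin n) (Fin d) ℝ := Matrix.of X

/-- The Frobenius norm of a matrix. -/
def frobNorm {m k : Type*} [Fintype m] [Fintype k] (A : Matrix m k ℝ) : ℝ :=
  Real.sqrt (∑ i, ∑ j, (A i j) ^ 2)

/-- The squared-distance matrix `D²(X)`. -/
def sqDistMat {n d : ℕ} (X : Fin n → Fin d → ℝ) : Matrix (Fin n) (Fin n) ℝ :=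
  Matrix.of fun i j => (rdist X i j) ^ 2

/-- The centered Gram matrix `G(X) = -(1/2) J D²(X) J`. -/
def gramMat {n d : ℕ} (X : Fin n → Fin d → ℝ) : Matrix (Fin n) (Fin n) ℝ :=
  (-(1 / 2 : ℝ)) • (centerMat n * sqDistMat X * centerMat n)

/-- The smallest singular value of an `n × d` matrix: the infimum of `‖Av‖` over
unit vectors `v`. -/
def sMin {n d : ℕ} (A : Matrix (Fin n) (Fin d) ℝ) : ℝ :=
  sInf {t | ∃ v : Fin d → ℝ, ∑ k, v k ^ 2 = 1 ∧ t = Real.sqrt (∑ i, (A.mulVec v i) ^ 2)}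

/-- The orbit distance `d_G(X, X⋆)`. -/
def orbitDist {n d : ℕ} (X Xstar : Fin n → Fin d → ℝ) : ℝ :=
  sInf {t | ∃ Q : Matrix (Fin d) (Fin d) ℝ, Q ∈ Matrix.orthogonalGroup (Fin d) ℝ ∧
    t = (Real.sqrt n)⁻¹ *
      frobNorm (centerMat n * toMat X - centerMat n * toMat Xstar * Q)}

/-- The uniform distribution on `[0,1]^d`. -/
def uniformCube (d : ℕ) : Measure (Fin d → ℝ) :=
  Measure.pi fun _ => volume.restrict (Set.Icc 0 1)

/-- The design measure: `n` i.i.d. uniform points on `[0,1]^d`. -/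
def designMeasure (n d : ℕ) : Measure (Fin n → Fin d → ℝ) :=
  Measure.pi fun _ => uniformCube d

/-- The noise measure: i.i.d. standard Gaussian entries. -/
def noiseMeasure (n : ℕ) : Measure (Fin n → Fin n → ℝ) :=
  Measure.pi fun _ => Measure.pi fun _ => stdGaussian

/-- The joint law of `(X⋆, Z)`. -/
def jointMeasure (n d : ℕ) :
    Measure ((Fin n → Fin d → ℝ) × (Fin n → Fin n → ℝ)) :=
  (designMeasure n d).prod (noiseMeasure n)

/-- The prior measure (supported on the cube, with Lebesgue density `π₀`). -/
def priorMeas (d : ℕ) (pri : (n : ℕ) → (Fin n → Fin d → ℝ) → ℝ) (n : ℕ) :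
    Measure (Fin n → Fin d → ℝ) :=
  ((volume : Measure (Fin n → Fin d → ℝ)).restrict (cube n d)).withDensity
    fun X => ENNReal.ofReal (pri n X)

/-- The (normalized) Gibbs measure ∝ `prior(dX) exp(-N R(X))`. -/
def gibbs {S : Type*} [MeasurableSpace S] (prior : Measure S) (R : S → ℝ) (Nn : ℝ) :
    Measure S :=
  ((prior.withDensity fun X => ENNReal.ofReal (Real.exp (-Nn * R X))) Set.univ)⁻¹ •
    prior.withDensity fun X => ENNReal.ofReal (Real.exp (-Nn * R X))

/-- Total variation distance between measures. -/
def tvDist {S : Type*} [MeasurableSpace S] (μ ν : Measure S) : ℝ :=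
  ⨆ A : {A : Set S // MeasurableSet A}, |(μ A).toReal - (ν A).toReal|

/-- `m`-step iterate of a Markov kernel. -/
def kIter {S : Type*} [MeasurableSpace S] (P : Kernel S S) : ℕ → Kernel S S
  | 0 => Kernel.id
  | m + 1 => Kernel.comp P (kIter P m)


open scoped ENNReal NNReal

lemma stdPDF_eq : stdPDF = ProbabilityTheory.gaussianPDFReal 0 1 := by
  ext x
  simp [stdPDF, ProbabilityTheory.gaussianPDFReal, div_eq_inv_mul]

lemma stdPDF_pos (x : ℝ) : 0 < stdPDF x := by
  have := Real.pi_pos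
  unfold stdPDF
  positivity

lemma continuous_stdPDF : Continuous stdPDF := by
  unfold stdPDF; fun_prop

lemma measurable_stdPDF : Measurable stdPDF := continuous_stdPDF.measurable

lemma integrable_stdPDF : Integrable stdPDF := stdPDF_eq ▸ integrable_gaussianPDFReal 0 1

lemma integral_stdPDF : ∫ x, stdPDF x = 1 := by
  rw [stdPDF_eq]; exact integral_gaussianPDFReal_eq_one 0 one_ne_zero

lemma stdPDF_neg (x : ℝ) : stdPDF (-x) = stdPDF x := by simp [stdPDF]

lemma stdPDF_anti {a b : ℝ} (ha : 0 ≤ a) (hab : a ≤ b) : stdPDF b ≤ stdPDF a := by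
  unfold stdPDF
  gcongr

lemma stdGaussian_withDensity :
    _root_.stdGaussian = volume.withDensity fun x => ENNReal.ofReal (stdPDF x) := by
  rw [_root_.stdGaussian, ProbabilityTheory.gaussianReal_of_var_ne_zero 0 one_ne_zero, stdPDF_eq]
  rfl

instance : IsProbabilityMeasure stdGaussian := by
  rw [_root_.stdGaussian]; infer_instance

lemma stdGaussian_withDensity' :
    _root_.stdGaussian = volume.withDensity fun x => ((stdPDF x).toNNReal : ℝ≥0∞) :=
  stdGaussian_withDensity

lemma integral_stdGaussian (g : ℝ → ℝ) :
    ∫ z, g z ∂stdGaussian = ∫ z, stdPDF z * g z := by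
  rw [stdGaussian_withDensity',
    integral_withDensity_eq_integral_smul measurable_stdPDF.real_toNNReal g]
  congr 1; ext z
  rw [NNReal.smul_def, smul_eq_mul, Real.coe_toNNReal _ (stdPDF_pos z).le]

lemma setIntegral_stdGaussian (g : ℝ → ℝ) {s : Set ℝ} (hs : MeasurableSet s) :
    ∫ z in s, g z ∂stdGaussian = ∫ z in s, stdPDF z * g z := by
  rw [stdGaussian_withDensity',
    setIntegral_withDensity_eq_setIntegral_smul measurable_stdPDF.real_toNNReal g hs]
  apply setIntegral_congr_fun hs
  intro z _
  simp only [NNReal.smul_def, smul_eq_mul, Real.coe_toNNReal _ (stdPDF_pos z).le]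

lemma integrable_stdGaussian_iff (g : ℝ → ℝ) :
    Integrable g stdGaussian ↔ Integrable (fun z => stdPDF z * g z) volume := by
  rw [stdGaussian_withDensity',
    integrable_withDensity_iff_integrable_smul measurable_stdPDF.real_toNNReal]
  constructor <;> intro h <;> refine h.congr (Eventually.of_forall fun z => ?_) <;>
    simp only [NNReal.smul_def, smul_eq_mul, Real.coe_toNNReal _ (stdPDF_pos z).le]

lemma integrable_of_bounded_stdGaussian {g : ℝ → ℝ} (hm : Measurable g) (C : ℝ)
    (h : ∀ z, |g z| ≤ C) : Integrable g stdGaussian :=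
  ⟨hm.aestronglyMeasurable,
    HasFiniteIntegral.of_bounded (C := C)
      (ae_of_all _ fun z => by simpa [Real.norm_eq_abs] using h z)⟩

lemma intervalIntegrable_stdPDF (a b : ℝ) : IntervalIntegrable stdPDF volume a b :=
  integrable_stdPDF.intervalIntegrable

lemma stdCDF_sub_eq (a b : ℝ) : stdCDF b - stdCDF a = ∫ x in a..b, stdPDF x := by
  unfold stdCDF
  rw [intervalIntegral.integral_Iic_sub_Iic (integrable_stdPDF.integrableOn (s := Set.Iic a))
    (integrable_stdPDF.integrableOn (s := Set.Iic b))]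

lemma stdCDF_strict {a b : ℝ} (h : a < b) : stdCDF a < stdCDF b := by
  have h2 := intervalIntegral.intervalIntegral_pos_of_pos (f := stdPDF) (intervalIntegrable_stdPDF a b)
    stdPDF_pos h
  have := stdCDF_sub_eq a b
  linarith

lemma stdCDF_mono {a b : ℝ} (h : a ≤ b) : stdCDF a ≤ stdCDF b := by
  rcases eq_or_lt_of_le h with rfl | h
  · exact le_rfl
  · exact (stdCDF_strict h).le

lemma stdCDF_nonneg (x : ℝ) : 0 ≤ stdCDF x :=
  setIntegral_nonneg measurableSet_Iic fun z _ => (stdPDF_pos z).le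

lemma integral_stdPDF_Ioi (x : ℝ) : ∫ z in Set.Ioi x, stdPDF z = 1 - stdCDF x := by
  have h := integral_add_compl (measurableSet_Iic (a := x)) integrable_stdPDF
  rw [Set.compl_Iic, integral_stdPDF] at h
  have : stdCDF x = ∫ z in Set.Iic x, stdPDF z := rfl
  linarith

lemma integral_stdPDF_Ioc {a b : ℝ} (h : a ≤ b) :
    ∫ x in Set.Ioc a b, stdPDF x = stdCDF b - stdCDF a := by
  rw [stdCDF_sub_eq, intervalIntegral.integral_of_le h]

lemma stdCDF_neg (x : ℝ) : stdCDF (-x) = 1 - stdCDF x := by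
  have h1 : stdCDF (-x) = ∫ z in Set.Iic (-x), stdPDF (-z) := by
    rw [stdCDF]; congr 1; ext z; rw [stdPDF_neg]
  rw [h1, integral_comp_neg_Iic, neg_neg, integral_stdPDF_Ioi]

lemma stdCDF_zero : stdCDF 0 = 1/2 := by
  have := stdCDF_neg 0
  rw [neg_zero] at this
  linarith

lemma stdCDF_pos (x : ℝ) : 0 < stdCDF x :=
  lt_of_le_of_lt (stdCDF_nonneg (x - 1)) (stdCDF_strict (by linarith))

lemma stdCDF_lt_one (x : ℝ) : stdCDF x < 1 := by
  have h1 : ∫ z in Set.Ioc x (x+1), stdPDF z ≤ ∫ z in Set.Ioi x, stdPDF z := by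
    apply setIntegral_mono_set integrable_stdPDF.integrableOn
      (ae_of_all _ fun z => (stdPDF_pos z).le)
    exact HasSubset.Subset.eventuallyLE Set.Ioc_subset_Ioi_self
  rw [integral_stdPDF_Ioi, integral_stdPDF_Ioc (by linarith)] at h1
  have := stdCDF_strict (show x < x + 1 by linarith)
  linarith

lemma intervalIntegral_stdPDF_le {a b : ℝ} (ha : 0 ≤ a) (hab : a ≤ b) :
    ∫ x in a..b, stdPDF x ≤ (b - a) * stdPDF a := by
  have h := intervalIntegral.integral_mono_on hab (intervalIntegrable_stdPDF a b)
    (intervalIntegrable_const (c := stdPDF a))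
    (fun x hx => stdPDF_anti ha hx.1)
  rw [intervalIntegral.integral_const] at h
  simpa [smul_eq_mul] using h

lemma intervalIntegral_stdPDF_ge {a b : ℝ} (ha : 0 ≤ a) (hab : a ≤ b) :
    (b - a) * stdPDF b ≤ ∫ x in a..b, stdPDF x := by
  have h := intervalIntegral.integral_mono_on hab
    (intervalIntegrable_const (c := stdPDF b)) (intervalIntegrable_stdPDF a b)
    (fun x hx => stdPDF_anti (le_trans ha hx.1) hx.2)
  rw [intervalIntegral.integral_const] at h
  simpa [smul_eq_mul] using h

/-- Concavity-type bound: for `0 ≤ c ≤ x`,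
`c * (stdCDF x - 1/2) ≤ x * (stdCDF c - 1/2)`. -/
lemma stdCDF_concave_zero {c x : ℝ} (h0 : 0 ≤ c) (hcx : c ≤ x) :
    c * (stdCDF x - 1/2) ≤ x * (stdCDF c - 1/2) := by
  have hA : c * stdPDF c ≤ ∫ t in (0:ℝ)..c, stdPDF t := by
    simpa using intervalIntegral_stdPDF_ge le_rfl h0
  have hB : ∫ t in c..x, stdPDF t ≤ (x - c) * stdPDF c :=
    intervalIntegral_stdPDF_le h0 hcx
  have hsplit : (∫ t in (0:ℝ)..c, stdPDF t) + ∫ t in c..x, stdPDF t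
      = ∫ t in (0:ℝ)..x, stdPDF t :=
    intervalIntegral.integral_add_adjacent_intervals (intervalIntegrable_stdPDF 0 c)
      (intervalIntegrable_stdPDF c x)
  have h1 : stdCDF c - 1/2 = ∫ t in (0:ℝ)..c, stdPDF t := by
    rw [← stdCDF_sub_eq, stdCDF_zero]
  have h2 : stdCDF x - 1/2 = ∫ t in (0:ℝ)..x, stdPDF t := by
    rw [← stdCDF_sub_eq, stdCDF_zero]
  rw [h1, h2, ← hsplit]
  have hφ : 0 ≤ stdPDF c := (stdPDF_pos c).le
  nlinarith [mul_le_mul_of_nonneg_left hB h0,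
    mul_le_mul_of_nonneg_left hA (sub_nonneg.mpr hcx),
    mul_le_mul_of_nonneg_left hA h0]

/-- Explicit piecewise form of the integrand of the population loss. -/
def Haux (σ M rs ρ : ℝ) (z : ℝ) : ℝ :=
  if z ≤ -rs / σ then -Real.log (stdCDF (-ρ / σ))
  else if z < (M - rs) / σ then
    Real.log σ + (z - (ρ - rs) / σ) ^ 2 / 2 + Real.log (Real.sqrt (2 * Real.pi))
  else -Real.log (1 - stdCDF ((M - ρ) / σ))

lemma lossM_capPos_eq (σ M rs ρ : ℝ) (hσ : 0 < σ) (hM : 0 < M) (hrs : 0 ≤ rs) (z : ℝ) :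
    lossM σ M (capPos M (rs + σ * z)) ρ = Haux σ M rs ρ z := by
  have h2π : (1:ℝ) ≤ 2 * Real.pi := by nlinarith [Real.pi_gt_three]
  have hsq : Real.sqrt (2 * Real.pi) ≠ 0 := by positivity
  by_cases h1 : z ≤ -rs / σ
  · have hu : rs + σ * z ≤ 0 := by
      rw [le_div_iff₀ hσ] at h1; nlinarith
    have hcap : capPos M (rs + σ * z) = 0 := by
      rw [capPos, max_eq_right hu, min_eq_right hM.le]
    rw [hcap, lossM, qDen, if_pos rfl, Haux, if_pos h1]
  · by_cases h2 : z < (M - rs) / σ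
    · have hu0 : 0 < rs + σ * z := by
        rw [not_le, div_lt_iff₀ hσ] at h1; nlinarith
      have huM : rs + σ * z < M := by
        rw [lt_div_iff₀ hσ] at h2; nlinarith
      have hcap : capPos M (rs + σ * z) = rs + σ * z := by
        rw [capPos, max_eq_left hu0.le, min_eq_right huM.le]
      rw [hcap, lossM, qDen, if_neg hu0.ne', if_neg huM.ne, Haux, if_neg h1, if_pos h2]
      rw [stdPDF]
      rw [Real.log_mul (inv_ne_zero hσ.ne') (by positivity),
        Real.log_div (Real.exp_ne_zero _) hsq, Real.log_exp, Real.log_inv]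
      have harg : (rs + σ * z - ρ) / σ = z - (ρ - rs) / σ := by
        field_simp; ring
      rw [harg]
      ring
    · have huM : M ≤ rs + σ * z := by
        rw [not_lt, div_le_iff₀ hσ] at h2; nlinarith
      have hcap : capPos M (rs + σ * z) = M := by
        rw [capPos, max_eq_left (by linarith : (0:ℝ) ≤ rs + σ * z), min_eq_left huM]
      rw [hcap, lossM, qDen, if_neg hM.ne', if_pos rfl, Haux, if_neg h1, if_neg h2]

lemma measurable_Haux (σ M rs ρ : ℝ) : Measurable (Haux σ M rs ρ) := by
  unfold Haux
  refine Measurable.ite measurableSet_Iic measurable_const ?_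
  refine Measurable.ite measurableSet_Iio ?_ measurable_const
  fun_prop

lemma abs_Haux_le (σ M rs ρ : ℝ) (hσ : 0 < σ) (hM : 0 < M) (h0ρ : 0 ≤ ρ) (hρM : ρ ≤ M)
    (z : ℝ) :
    |Haux σ M rs ρ z| ≤ |Real.log (stdCDF (-ρ / σ))| + |Real.log (1 - stdCDF ((M - ρ) / σ))|
      + |Real.log σ| + (M / σ) ^ 2 / 2 + Real.log (Real.sqrt (2 * Real.pi)) := by
  have h2π : (1:ℝ) ≤ 2 * Real.pi := by nlinarith [Real.pi_gt_three]
  have h1sq : (1:ℝ) ≤ Real.sqrt (2 * Real.pi) := by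
    nlinarith [Real.sq_sqrt (le_trans zero_le_one h2π), Real.sqrt_nonneg (2 * Real.pi)]
  have hlogsq : 0 ≤ Real.log (Real.sqrt (2 * Real.pi)) := Real.log_nonneg h1sq
  have hM2 : 0 ≤ (M / σ) ^ 2 / 2 := by positivity
  unfold Haux
  split_ifs with h1 h2
  · rw [abs_neg]
    have := abs_nonneg (Real.log (1 - stdCDF ((M - ρ) / σ)))
    have := abs_nonneg (Real.log σ)
    linarith
  · -- middle region
    rw [not_le, div_lt_iff₀ hσ] at h1
    rw [lt_div_iff₀ hσ] at h2
    have hrep : z - (ρ - rs) / σ = (z * σ - (ρ - rs)) / σ := by field_simp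
    have hub : z - (ρ - rs) / σ ≤ M / σ := by
      rw [hrep, div_le_div_iff_of_pos_right hσ]
      nlinarith
    have hlb : -(M / σ) ≤ z - (ρ - rs) / σ := by
      rw [hrep, ← neg_div, div_le_div_iff_of_pos_right hσ]
      nlinarith
    have hw2 : (z - (ρ - rs) / σ) ^ 2 ≤ (M / σ) ^ 2 := sq_le_sq' hlb hub
    have htri : |Real.log σ + (z - (ρ - rs) / σ) ^ 2 / 2 + Real.log (Real.sqrt (2 * Real.pi))|
        ≤ |Real.log σ| + (M / σ) ^ 2 / 2 + Real.log (Real.sqrt (2 * Real.pi)) := by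
      calc |Real.log σ + (z - (ρ - rs) / σ) ^ 2 / 2 + Real.log (Real.sqrt (2 * Real.pi))|
          ≤ |Real.log σ + (z - (ρ - rs) / σ) ^ 2 / 2| + |Real.log (Real.sqrt (2 * Real.pi))| :=
            abs_add_le _ _
        _ ≤ |Real.log σ| + |(z - (ρ - rs) / σ) ^ 2 / 2| + |Real.log (Real.sqrt (2 * Real.pi))| := by
            linarith [abs_add_le (Real.log σ) ((z - (ρ - rs) / σ) ^ 2 / 2)]
        _ ≤ |Real.log σ| + (M / σ) ^ 2 / 2 + Real.log (Real.sqrt (2 * Real.pi)) := by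
            rw [abs_of_nonneg (by positivity : (0:ℝ) ≤ (z - (ρ - rs) / σ) ^ 2 / 2),
              abs_of_nonneg hlogsq]
            linarith
    have := abs_nonneg (Real.log (stdCDF (-ρ / σ)))
    have := abs_nonneg (Real.log (1 - stdCDF ((M - ρ) / σ)))
    linarith
  · rw [abs_neg]
    have := abs_nonneg (Real.log (stdCDF (-ρ / σ)))
    have := abs_nonneg (Real.log σ)
    linarith

lemma integrable_Haux (σ M rs ρ : ℝ) (hσ : 0 < σ) (hM : 0 < M) (h0ρ : 0 ≤ ρ) (hρM : ρ ≤ M) :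
    Integrable (Haux σ M rs ρ) stdGaussian :=
  integrable_of_bounded_stdGaussian (measurable_Haux σ M rs ρ) _
    (abs_Haux_le σ M rs ρ hσ hM h0ρ hρM)

lemma popLoss_eq (σ M rs ρ : ℝ) (hσ : 0 < σ) (hM : 0 < M) (hrs : 0 ≤ rs) :
    popLoss σ M ρ rs = ∫ z, Haux σ M rs ρ z ∂stdGaussian := by
  unfold popLoss
  exact integral_congr_ae (ae_of_all _ fun z => lossM_capPos_eq σ M rs ρ hσ hM hrs z)

/-- The binary KL bound: `(2p-1) log(p/(1-p)) ≥ (2p-1)²`. -/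
lemma binary_kl_bound {p : ℝ} (h0 : 0 < p) (h1 : p < 1) :
    (2 * p - 1) ^ 2 ≤ (2 * p - 1) * Real.log (p / (1 - p)) := by
  have h1p : 0 < 1 - p := by linarith
  have hlog : Real.log (p / (1 - p)) = Real.log p - Real.log (1 - p) :=
    Real.log_div h0.ne' h1p.ne'
  rcases le_or_gt (1/2) p with hp | hp
  · have hb : Real.log ((1 - p) / p) ≤ (1 - p) / p - 1 :=
      Real.log_le_sub_one_of_pos (by positivity)
    have hlog2 : Real.log ((1 - p) / p) = Real.log (1 - p) - Real.log p :=
      Real.log_div h1p.ne' h0.ne'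
    have e1 : (1 - p) / p - 1 ≤ 1 - 2 * p := by
      rw [div_sub_one h0.ne', div_le_iff₀ h0]
      nlinarith
    have hL : 2 * p - 1 ≤ Real.log p - Real.log (1 - p) := by
      rw [hlog2] at hb; linarith
    have := mul_le_mul_of_nonneg_left hL (by linarith : (0:ℝ) ≤ 2 * p - 1)
    rw [hlog]; nlinarith
  · have hb : Real.log (p / (1 - p)) ≤ p / (1 - p) - 1 :=
      Real.log_le_sub_one_of_pos (by positivity)
    have e1 : p / (1 - p) - 1 ≤ 2 * p - 1 := by
      rw [div_sub_one h1p.ne', div_le_iff₀ h1p]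
      nlinarith
    have hL : Real.log (p / (1 - p)) ≤ 2 * p - 1 := by linarith
    have := mul_le_mul_of_nonpos_left hL (by linarith : 2 * p - 1 ≤ (0:ℝ))
    nlinarith

def Daux (σ M r rs z : ℝ) : ℝ := Haux σ M rs r z - Haux σ M rs rs z

lemma measurable_Daux (σ M r rs : ℝ) : Measurable (Daux σ M r rs) :=
  (measurable_Haux σ M rs r).sub (measurable_Haux σ M rs rs)

lemma expD1 {σ M r rs : ℝ} (z : ℝ) (hz : z ≤ -rs / σ) :
    Real.exp (-(Daux σ M r rs z)) = stdCDF (-r / σ) / stdCDF (-rs / σ) := by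
  unfold Daux Haux
  rw [if_pos hz, if_pos hz]
  rw [show -(-Real.log (stdCDF (-r / σ)) - -Real.log (stdCDF (-rs / σ)))
      = Real.log (stdCDF (-r / σ)) - Real.log (stdCDF (-rs / σ)) by ring]
  rw [Real.exp_sub, Real.exp_log (stdCDF_pos _), Real.exp_log (stdCDF_pos _)]

lemma expD3 {σ M r rs : ℝ} (z : ℝ) (hz1 : ¬ z ≤ -rs / σ) (hz2 : ¬ z < (M - rs) / σ) :
    Real.exp (-(Daux σ M r rs z))
      = (1 - stdCDF ((M - r) / σ)) / (1 - stdCDF ((M - rs) / σ)) := by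
  unfold Daux Haux
  rw [if_neg hz1, if_neg hz1, if_neg hz2, if_neg hz2]
  rw [show -(-Real.log (1 - stdCDF ((M - r) / σ)) - -Real.log (1 - stdCDF ((M - rs) / σ)))
      = Real.log (1 - stdCDF ((M - r) / σ)) - Real.log (1 - stdCDF ((M - rs) / σ)) by ring]
  rw [Real.exp_sub, Real.exp_log (by linarith [stdCDF_lt_one ((M - r) / σ)]),
    Real.exp_log (by linarith [stdCDF_lt_one ((M - rs) / σ)])]

lemma expD2 {σ M r rs : ℝ} (z : ℝ) (hz1 : ¬ z ≤ -rs / σ) (hz2 : z < (M - rs) / σ) :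
    stdPDF z * Real.exp (-(Daux σ M r rs z)) = stdPDF (z - (r - rs) / σ) := by
  unfold Daux Haux
  rw [if_neg hz1, if_neg hz1, if_pos hz2, if_pos hz2]
  rw [show rs - rs = 0 by ring, zero_div, sub_zero]
  rw [stdPDF, stdPDF, div_mul_eq_mul_div, ← Real.exp_add]
  congr 1
  ring

lemma integral_stdPDF_shift_Ioc {a b : ℝ} (sh : ℝ) (h : a ≤ b) :
    ∫ z in Set.Ioc a b, stdPDF (z - sh) = stdCDF (b - sh) - stdCDF (a - sh) := by
  rw [← intervalIntegral.integral_of_le h, intervalIntegral.integral_comp_sub_right,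
    ← stdCDF_sub_eq]

lemma integral_stdPDF_shift_Ioo {a b : ℝ} (sh : ℝ) (h : a ≤ b) :
    ∫ z in Set.Ioo a b, stdPDF (z - sh) = stdCDF (b - sh) - stdCDF (a - sh) := by
  rw [← integral_Ioc_eq_integral_Ioo, integral_stdPDF_shift_Ioc sh h]

lemma integral_stdPDF_Ici (x : ℝ) : ∫ z in Set.Ici x, stdPDF z = 1 - stdCDF x := by
  rw [integral_Ici_eq_integral_Ioi, integral_stdPDF_Ioi]

theorem klBound (σ M r rs : ℝ) (hσ : 0 < σ) (hM : 0 < M) (h0r : 0 ≤ r) (hrM : r ≤ M)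
    (h0s : 0 ≤ rs) (hsM : rs ≤ M) (hne : r ≠ rs) :
    (2 * stdCDF ((r - rs) / (2 * σ)) - 1) ^ 2 ≤ popLoss σ M r rs - popLoss σ M rs rs := by
  -- abbreviations
  set e := (r - rs) / (2 * σ) with he_def
  set a1 := -rs / σ with ha1_def
  set b1 := (M - rs) / σ with hb1_def
  set sh := (r - rs) / σ with hsh_def
  set p := stdCDF e with hp_def
  set q := stdCDF (-e) with hq_def
  have hqp : q = 1 - p := by rw [hq_def, stdCDF_neg, hp_def]
  have hp0 : 0 < p := stdCDF_pos e
  have hp1 : p < 1 := stdCDF_lt_one e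
  have hq0 : 0 < q := stdCDF_pos (-e)
  have hsum : 0 < r + rs := by
    by_contra hcon
    push_neg at hcon
    have h1 : r = 0 := le_antisymm (by linarith) h0r
    have h2 : rs = 0 := le_antisymm (by linarith) h0s
    exact hne (h1.trans h2.symm)
  have hsum2 : r + rs < 2 * M := by
    by_contra hcon
    push_neg at hcon
    have hr : r = M := by linarith
    have hrs2 : rs = M := by linarith
    exact hne (hr.trans hrs2.symm)
  have ha1e : a1 < e := by
    rw [ha1_def, he_def, div_lt_div_iff₀ hσ (by linarith)]
    nlinarith
  have heb1 : e < b1 := by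
    rw [he_def, hb1_def, div_lt_div_iff₀ (by linarith) hσ]
    nlinarith
  have ha1b1 : a1 < b1 := ha1e.trans heb1
  -- the comparison function
  set C : ℝ → ℝ := fun z => if z ≤ e then p / q else q / p with hC_def
  set F : ℝ → ℝ := fun z => C z * Real.exp (-(Daux σ M r rs z)) with hF_def
  set Ψ : ℝ → ℝ := fun z => stdPDF z * F z with hΨ_def
  have hCpos : ∀ z, 0 < C z := by
    intro z
    rw [hC_def]
    dsimp only
    split_ifs
    · exact div_pos hp0 hq0
    · exact div_pos hq0 hp0
  -- regional identification of Ψ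
  have hF1 : ∀ z ∈ Set.Iic a1, (fun t => (p / q) * (stdCDF (-r / σ) / stdCDF (-rs / σ))
      * stdPDF t) z = Ψ z := by
    intro z hz
    have hze : z ≤ e := le_of_lt (lt_of_le_of_lt hz ha1e)
    rw [hΨ_def, hF_def, hC_def]
    dsimp only
    rw [if_pos hze, expD1 z hz]
    ring
  have hF2 : ∀ z ∈ Set.Ioc a1 e, (fun t => (p / q) * stdPDF (t - sh)) z = Ψ z := by
    intro z hz
    rw [hΨ_def, hF_def, hC_def]
    dsimp only
    rw [if_pos hz.2, mul_comm (stdPDF z), mul_assoc, mul_comm _ (stdPDF z),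
      expD2 z (not_le.mpr hz.1) (lt_of_le_of_lt hz.2 heb1)]
  have hF3 : ∀ z ∈ Set.Ioo e b1, (fun t => (q / p) * stdPDF (t - sh)) z = Ψ z := by
    intro z hz
    rw [hΨ_def, hF_def, hC_def]
    dsimp only
    rw [if_neg (not_le.mpr hz.1), mul_comm (stdPDF z), mul_assoc, mul_comm _ (stdPDF z),
      expD2 z (not_le.mpr (ha1e.trans hz.1)) hz.2]
  have hF4 : ∀ z ∈ Set.Ici b1, (fun t => (q / p) * ((1 - stdCDF ((M - r) / σ))
      / (1 - stdCDF ((M - rs) / σ))) * stdPDF t) z = Ψ z := by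
    intro z hz
    rw [hΨ_def, hF_def, hC_def]
    dsimp only
    rw [if_neg (not_le.mpr (lt_of_lt_of_le heb1 hz)),
      expD3 z (not_le.mpr (lt_of_lt_of_le ha1b1 hz)) (not_lt.mpr hz)]
    ring
  -- integrability of the pieces
  have hIsh : Integrable (fun t => stdPDF (t - sh)) volume :=
    integrable_stdPDF.comp_sub_right sh
  have hP1 : IntegrableOn Ψ (Set.Iic a1) volume :=
    ((integrable_stdPDF.const_mul _).integrableOn).congr_fun hF1 measurableSet_Iic
  have hP2 : IntegrableOn Ψ (Set.Ioc a1 e) volume :=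
    ((hIsh.const_mul _).integrableOn).congr_fun hF2 measurableSet_Ioc
  have hP3 : IntegrableOn Ψ (Set.Ioo e b1) volume :=
    ((hIsh.const_mul _).integrableOn).congr_fun hF3 measurableSet_Ioo
  have hP4 : IntegrableOn Ψ (Set.Ici b1) volume :=
    ((integrable_stdPDF.const_mul _).integrableOn).congr_fun hF4 measurableSet_Ici
  have hIoiE : IntegrableOn Ψ (Set.Ioi e) volume := by
    rw [← Set.Ioo_union_Ici_eq_Ioi heb1]
    exact hP3.union hP4
  have hIoiA : IntegrableOn Ψ (Set.Ioi a1) volume := by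
    rw [← Set.Ioc_union_Ioi_eq_Ioi ha1e.le]
    exact hP2.union hIoiE
  have hΨint : Integrable Ψ volume := by
    rw [← integrableOn_univ, ← Set.Iic_union_Ioi (a := a1)]
    exact hP1.union hIoiA
  -- the total integral of Ψ is 1
  have hκ0 : stdCDF (-r / σ) / stdCDF (-rs / σ) * stdCDF (-rs / σ) = stdCDF (-r / σ) :=
    div_mul_cancel₀ _ (stdCDF_pos _).ne'
  have hκM : (1 - stdCDF ((M - r) / σ)) / (1 - stdCDF ((M - rs) / σ))
      * (1 - stdCDF ((M - rs) / σ)) = 1 - stdCDF ((M - r) / σ) :=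
    div_mul_cancel₀ _ (by linarith [stdCDF_lt_one ((M - rs) / σ)])
  have ha1sh : a1 - sh = -r / σ := by rw [ha1_def, hsh_def]; ring
  have hesh : e - sh = -e := by rw [he_def, hsh_def]; ring
  have hb1sh : b1 - sh = (M - r) / σ := by rw [hb1_def, hsh_def]; ring
  have hI1 : ∫ z in Set.Iic a1, Ψ z = (p / q) * stdCDF (-r / σ) := by
    rw [← setIntegral_congr_fun measurableSet_Iic hF1, integral_const_mul]
    have : ∫ t in Set.Iic a1, stdPDF t = stdCDF a1 := rfl
    rw [this, mul_assoc, ha1_def, hκ0]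
  have hI2 : ∫ z in Set.Ioc a1 e, Ψ z = (p / q) * (q - stdCDF (-r / σ)) := by
    rw [← setIntegral_congr_fun measurableSet_Ioc hF2, integral_const_mul,
      integral_stdPDF_shift_Ioc sh ha1e.le, hesh, ha1sh, ← hq_def]
  have hI3 : ∫ z in Set.Ioo e b1, Ψ z = (q / p) * (stdCDF ((M - r) / σ) - q) := by
    rw [← setIntegral_congr_fun measurableSet_Ioo hF3, integral_const_mul,
      integral_stdPDF_shift_Ioo sh heb1.le, hesh, hb1sh, ← hq_def]
  have hI4 : ∫ z in Set.Ici b1, Ψ z = (q / p) * (1 - stdCDF ((M - r) / σ)) := by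
    rw [← setIntegral_congr_fun measurableSet_Ici hF4, integral_const_mul,
      integral_stdPDF_Ici, mul_assoc, hb1_def, hκM]
  have htot : ∫ z, Ψ z = 1 := by
    have hsplit1 : ∫ z, Ψ z = (∫ z in Set.Iic a1, Ψ z) + ∫ z in Set.Ioi a1, Ψ z := by
      rw [← Set.compl_Iic]
      exact (integral_add_compl measurableSet_Iic hΨint).symm
    have hsplit2 : ∫ z in Set.Ioi a1, Ψ z
        = (∫ z in Set.Ioc a1 e, Ψ z) + ∫ z in Set.Ioi e, Ψ z := by
      rw [← Set.Ioc_union_Ioi_eq_Ioi ha1e.le]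
      exact setIntegral_union (Set.Ioc_disjoint_Ioi le_rfl) measurableSet_Ioi hP2 hIoiE
    have hsplit3 : ∫ z in Set.Ioi e, Ψ z
        = (∫ z in Set.Ioo e b1, Ψ z) + ∫ z in Set.Ici b1, Ψ z := by
      rw [← Set.Ioo_union_Ici_eq_Ioi heb1]
      refine setIntegral_union ?_ measurableSet_Ici hP3 hP4
      exact Set.disjoint_left.mpr fun x hx hx' => absurd hx.2 (not_lt.mpr hx')
    rw [hsplit1, hsplit2, hsplit3, hI1, hI2, hI3, hI4, hqp]
    have hq0' : (1:ℝ) - p ≠ 0 := by rw [hqp] at hq0; linarith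
    field_simp
    ring
  have hFint : Integrable F stdGaussian := (integrable_stdGaussian_iff F).mpr hΨint
  have hintF : ∫ z, F z ∂stdGaussian = 1 := by rw [integral_stdGaussian F]; exact htot
  -- the log part
  set LC : ℝ → ℝ := fun z => Real.log (C z) with hLC_def
  have hLCsplit : ∀ z, LC z = if z ≤ e then Real.log (p / q) else Real.log (q / p) := by
    intro z
    rw [hLC_def, hC_def]
    dsimp only
    split_ifs <;> rfl
  have hLCmeas : Measurable LC := by
    have : LC = fun z => if z ≤ e then Real.log (p / q) else Real.log (q / p) :=
      funext hLCsplit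
    rw [this]
    exact Measurable.ite measurableSet_Iic measurable_const measurable_const
  have hLCint : Integrable LC stdGaussian := by
    refine integrable_of_bounded_stdGaussian hLCmeas
      (|Real.log (p / q)| + |Real.log (q / p)|) fun z => ?_
    rw [hLCsplit z]
    split_ifs
    · linarith [abs_nonneg (Real.log (q / p))]
    · linarith [abs_nonneg (Real.log (p / q))]
  have hintLC : ∫ z, LC z ∂stdGaussian = (2 * p - 1) * Real.log (p / (1 - p)) := by
    rw [integral_stdGaussian LC]
    have hcong : ∀ z, stdPDF z * LC z
        = (if z ≤ e then Real.log (p / q) * stdPDF z else Real.log (q / p) * stdPDF z) := by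
      intro z
      rw [hLCsplit z]
      split_ifs <;> ring
    rw [integral_congr_ae (ae_of_all _ hcong)]
    have hint1 : IntegrableOn
        (fun z => if z ≤ e then Real.log (p / q) * stdPDF z else Real.log (q / p) * stdPDF z)
        (Set.Iic e) volume := by
      refine ((integrable_stdPDF.const_mul (Real.log (p / q))).integrableOn).congr_fun
        (fun z hz => ?_) measurableSet_Iic
      exact (if_pos hz).symm
    have hint2 : IntegrableOn
        (fun z => if z ≤ e then Real.log (p / q) * stdPDF z else Real.log (q / p) * stdPDF z)
        (Set.Ioi e) volume := by
      refine ((integrable_stdPDF.const_mul (Real.log (q / p))).integrableOn).congr_fun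
        (fun z hz => ?_) measurableSet_Ioi
      exact (if_neg (not_le.mpr hz)).symm
    have hintall : Integrable
        (fun z => if z ≤ e then Real.log (p / q) * stdPDF z else Real.log (q / p) * stdPDF z)
        volume := by
      rw [← integrableOn_univ, ← Set.Iic_union_Ioi (a := e)]
      exact hint1.union hint2
    have hsplit := (integral_add_compl (measurableSet_Iic (a := e)) hintall).symm
    rw [Set.compl_Iic] at hsplit
    rw [hsplit]
    have hv1 : ∫ z in Set.Iic e,
        (if z ≤ e then Real.log (p / q) * stdPDF z else Real.log (q / p) * stdPDF z)
        = Real.log (p / q) * p := by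
      have h1 : Set.EqOn
          (fun z => if z ≤ e then Real.log (p / q) * stdPDF z else Real.log (q / p) * stdPDF z)
          (fun z => Real.log (p / q) * stdPDF z) (Set.Iic e) := fun z hz => if_pos hz
      rw [setIntegral_congr_fun measurableSet_Iic h1, integral_const_mul]
      rfl
    have hv2 : ∫ z in Set.Ioi e,
        (if z ≤ e then Real.log (p / q) * stdPDF z else Real.log (q / p) * stdPDF z)
        = Real.log (q / p) * (1 - p) := by
      have h1 : Set.EqOn
          (fun z => if z ≤ e then Real.log (p / q) * stdPDF z else Real.log (q / p) * stdPDF z)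
          (fun z => Real.log (q / p) * stdPDF z) (Set.Ioi e) :=
        fun z hz => if_neg (not_le.mpr hz)
      rw [setIntegral_congr_fun measurableSet_Ioi h1, integral_const_mul,
        integral_stdPDF_Ioi, hp_def]
    rw [hv1, hv2, hqp]
    have hq0' : (0:ℝ) < 1 - p := by rw [hqp] at hq0; linarith
    rw [Real.log_div hp0.ne' hq0'.ne', Real.log_div hq0'.ne' hp0.ne']
    ring
  -- pointwise comparison and conclusion
  have hGD : ∀ z, 1 - F z + LC z ≤ Daux σ M r rs z := by
    intro z
    have h1 := Real.log_le_sub_one_of_pos (mul_pos (hCpos z) (Real.exp_pos (-(Daux σ M r rs z))))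
    rw [Real.log_mul (hCpos z).ne' (Real.exp_pos _).ne', Real.log_exp] at h1
    have h2 : LC z = Real.log (C z) := by rw [hLC_def]
    have h3 : F z = C z * Real.exp (-(Daux σ M r rs z)) := by rw [hF_def]
    linarith
  have hDint : Integrable (Daux σ M r rs) stdGaussian :=
    (integrable_Haux σ M rs r hσ hM h0r hrM).sub (integrable_Haux σ M rs rs hσ hM h0s hsM)
  have hGint : Integrable (fun z => 1 - F z + LC z) stdGaussian :=
    ((integrable_const 1).sub hFint).add hLCint
  have hmono : ∫ z, (1 - F z + LC z) ∂stdGaussian ≤ ∫ z, Daux σ M r rs z ∂stdGaussian :=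
    integral_mono hGint hDint hGD
  have hG : ∫ z, (1 - F z + LC z) ∂stdGaussian = (2 * p - 1) * Real.log (p / (1 - p)) := by
    have h1 : Integrable (fun z => 1 - F z) stdGaussian := (integrable_const 1).sub hFint
    rw [integral_add h1 hLCint, integral_sub (integrable_const 1) hFint, hintF, hintLC]
    simp [measure_univ]
  have hpop : popLoss σ M r rs - popLoss σ M rs rs = ∫ z, Daux σ M r rs z ∂stdGaussian := by
    rw [popLoss_eq σ M rs r hσ hM h0s, popLoss_eq σ M rs rs hσ hM h0s,
      ← integral_sub (integrable_Haux σ M rs r hσ hM h0r hrM)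
        (integrable_Haux σ M rs rs hσ hM h0s hsM)]
    rfl
  have hkl := binary_kl_bound hp0 hp1
  rw [hpop]
  calc (2 * p - 1) ^ 2 ≤ (2 * p - 1) * Real.log (p / (1 - p)) := hkl
    _ = ∫ z, (1 - F z + LC z) ∂stdGaussian := hG.symm
    _ ≤ ∫ z, Daux σ M r rs z ∂stdGaussian := hmono

lemma conc_bound (σ M δ : ℝ) (hσ : 0 < σ) (hM : 0 < M) (h0 : 0 ≤ δ) (hδM : δ ≤ M) :
    (stdCDF (M / (2 * σ)) - 1 / 2) * δ ≤ M * (stdCDF (δ / (2 * σ)) - 1 / 2) := by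
  have hc := stdCDF_concave_zero (c := δ / (2 * σ)) (x := M / (2 * σ)) (by positivity)
    ((div_le_div_iff_of_pos_right (by positivity)).mpr hδM)
  have h2 := mul_le_mul_of_nonneg_right hc (by positivity : (0:ℝ) ≤ 2 * σ)
  have e1 : δ / (2 * σ) * (stdCDF (M / (2 * σ)) - 1 / 2) * (2 * σ)
      = (stdCDF (M / (2 * σ)) - 1 / 2) * δ := by field_simp
  have e2 : M / (2 * σ) * (stdCDF (δ / (2 * σ)) - 1 / 2) * (2 * σ)
      = M * (stdCDF (δ / (2 * σ)) - 1 / 2) := by field_simp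
  rw [e1, e2] at h2
  exact h2

lemma final_sq_bound (σ M δ : ℝ) (hσ : 0 < σ) (hM : 0 < M) (h0 : 0 ≤ δ) (hδM : δ ≤ M) :
    (stdCDF (M / (2 * σ)) - 1 / 2) ^ 2 / (2 * M ^ 2) * δ ^ 2
      ≤ (2 * stdCDF (δ / (2 * σ)) - 1) ^ 2 := by
  have ha0 : 0 ≤ stdCDF (M / (2 * σ)) - 1 / 2 := by
    have := stdCDF_mono (by positivity : (0:ℝ) ≤ M / (2 * σ))
    rw [stdCDF_zero] at this; linarith
  have ht0 : 0 ≤ 2 * stdCDF (δ / (2 * σ)) - 1 := by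
    have := stdCDF_mono (by positivity : (0:ℝ) ≤ δ / (2 * σ))
    rw [stdCDF_zero] at this; linarith
  have hle : (stdCDF (M / (2 * σ)) - 1 / 2) * δ
      ≤ M * (2 * stdCDF (δ / (2 * σ)) - 1) / 2 := by
    have := conc_bound σ M δ hσ hM h0 hδM
    have he : M * (stdCDF (δ / (2 * σ)) - 1 / 2) = M * (2 * stdCDF (δ / (2 * σ)) - 1) / 2 := by
      ring
    linarith [he ▸ this]
  have h2 : ((stdCDF (M / (2 * σ)) - 1 / 2) * δ) ^ 2
      ≤ (M * (2 * stdCDF (δ / (2 * σ)) - 1) / 2) ^ 2 :=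
    pow_le_pow_left₀ (mul_nonneg ha0 h0) hle 2
  rw [div_mul_eq_mul_div, div_le_iff₀ (by positivity : (0:ℝ) < 2 * M ^ 2)]
  nlinarith [sq_nonneg (M * (2 * stdCDF (δ / (2 * σ)) - 1))]


/-- Lemma A.5: strong convexity of the pointwise population loss,
with the explicit constant `c_sc = (Φ(M/(2σ)) - 1/2)² / (2M²)`. -/
theorem strong_convexity_population_loss
    (d : ℕ) (hd : 1 ≤ d) (σ M : ℝ) (hσ : 0 < σ) (hM : Real.sqrt d ≤ M) :
    0 < (stdCDF (M / (2 * σ)) - 1 / 2) ^ 2 / (2 * M ^ 2) ∧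
    ∀ r ∈ Set.Icc (0 : ℝ) (Real.sqrt d), ∀ rstar ∈ Set.Icc (0 : ℝ) (Real.sqrt d),
      (stdCDF (M / (2 * σ)) - 1 / 2) ^ 2 / (2 * M ^ 2) * (r - rstar) ^ 2 ≤
        popLoss σ M r rstar - popLoss σ M rstar rstar := by
  have hd1 : (1:ℝ) ≤ Real.sqrt d := by
    rw [show (1:ℝ) = Real.sqrt 1 by simp]
    exact Real.sqrt_le_sqrt (by exact_mod_cast hd)
  have hM0 : (0:ℝ) < M := lt_of_lt_of_le (lt_of_lt_of_le one_pos hd1) hM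
  have ha : 0 < stdCDF (M / (2 * σ)) - 1 / 2 := by
    have := stdCDF_strict (show (0:ℝ) < M / (2 * σ) by positivity)
    rw [stdCDF_zero] at this; linarith
  constructor
  · positivity
  · intro r hr rstar hrs
    rcases eq_or_ne r rstar with heq | hne
    · subst heq; simp
    · have h0r : 0 ≤ r := hr.1
      have hrM : r ≤ M := hr.2.trans hM
      have h0s : 0 ≤ rstar := hrs.1
      have hsM : rstar ≤ M := hrs.2.trans hM
      have key := klBound σ M r rstar hσ hM0 h0r hrM h0s hsM hne
      rcases le_total rstar r with hle | hle
      · refine le_trans ?_ key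
        exact final_sq_bound σ M (r - rstar) hσ hM0 (by linarith) (by linarith)
      · have hflip : (r - rstar) / (2 * σ) = -((rstar - r) / (2 * σ)) := by ring
        rw [hflip, stdCDF_neg] at key
        have h2 : (2 * (1 - stdCDF ((rstar - r) / (2 * σ))) - 1) ^ 2
            = (2 * stdCDF ((rstar - r) / (2 * σ)) - 1) ^ 2 := by ring
        rw [h2] at key
        refine le_trans ?_ key
        have h3 : (r - rstar) ^ 2 = (rstar - r) ^ 2 := by ring
        rw [h3]
        exact final_sq_bound σ M (rstar - r) hσ hM0 (by linarith) (by linarith)
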